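/- Let -1 < β < 0 and define φ(z) = i(z₁ + z₂) - (1/4)(z₁⁴ + 2β z₁²z₂² + z₂⁴) on ℂ², corresponding to x = (1,1). Let ξ₀ = (1/2)(3-β)^{1/2}(1+β)^{-1/6}(1-β)^{-1/3}(1,-1) and η₀ = (1/2)((1+β)/(1-β))^{1/3}(1,1). Then z₀ = ξ₀ + iη₀ is a critical point of φ with φ(z₀) = -(3/4)((1+β)/(1-β))^{1/3} + i·Im φ(z₀) for some real imaginary part, i.e. Re φ(z₀) = -(3/4)((1+β)/(1-β))^{1/3}. -/

import Mathlib

/-!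
Euler's relation for the quartic `A` shows that at any critical point `A(z) = i(z₁ + z₂)`, so
`φ(z) = (3/4) i (z₁ + z₂)`, which for `z = (ξ + iη, -ξ + iη)` is the real number `-(3/2) η`.
For `z` of this shape the first critical equation splits into the real equations
`(1 + β) ξ² = (3 - β) η²` and `8 (1 - β) η³ = 1 + β`, which the given `ξ₀, η₀` solve; the second
critical equation is the first one with `z₁, z₂` swapped, i.e. with `ξ` replaced by `-ξ`.
-/

open Complex

theorem phase_eq_of_critical {β z₁ z₂ : ℂ}
    (h₁ : I - z₁ ^ 3 - β * z₁ * z₂ ^ 2 = 0) (h₂ : I - β * z₁ ^ 2 * z₂ - z₂ ^ 3 = 0) :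
    I * (z₁ + z₂) - 1 / 4 * (z₁ ^ 4 + 2 * β * z₁ ^ 2 * z₂ ^ 2 + z₂ ^ 4) = 3 / 4 * I * (z₁ + z₂) := by
  linear_combination (z₁ * h₁ + z₂ * h₂) / 4

theorem critical_eq_of_real {β a b : ℝ} (hβ : 1 + β ≠ 0)
    (ha : (1 + β) * a ^ 2 = (3 - β) * b ^ 2) (hb : 8 * (1 - β) * b ^ 3 = 1 + β) :
    I - ((a : ℂ) + b * I) ^ 3 - (β : ℂ) * ((a : ℂ) + b * I) * (-(a : ℂ) + b * I) ^ 2 = 0 := by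
  apply Complex.ext <;>
    simp only [pow_succ, pow_zero, one_mul, sub_re, sub_im, mul_re, mul_im, add_re, add_im,
      neg_re, neg_im, ofReal_re, ofReal_im, I_re, I_im, zero_re, zero_im]
  · linear_combination (-a) * ha
  · refine mul_left_cancel₀ hβ ?_
    linear_combination (-(b * (3 - β))) * ha - hb

theorem saddle_height_cube {β : ℝ} (h1 : 0 < 1 + β) (h2 : 0 < 1 - β) :
    8 * (1 - β) * (1 / 2 * ((1 + β) / (1 - β)) ^ ((1 : ℝ) / 3)) ^ 3 = 1 + β := by
  rw [mul_pow, one_div (3 : ℝ), ← Nat.cast_ofNat (R := ℝ) (n := 3),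
    Real.rpow_inv_natCast_pow (div_pos h1 h2).le three_ne_zero]
  field_simp
  ring

theorem saddle_width_sq {β : ℝ} (h1 : 0 < 1 + β) (h2 : 0 < 1 - β) (h3 : 0 < 3 - β) :
    (1 + β) * (1 / 2 * (3 - β) ^ ((1 : ℝ) / 2) * (1 + β) ^ (-(1 : ℝ) / 6)
        * (1 - β) ^ (-(1 : ℝ) / 3)) ^ 2
      = (3 - β) * (1 / 2 * ((1 + β) / (1 - β)) ^ ((1 : ℝ) / 3)) ^ 2 := by
  have hξη : 1 / 2 * (3 - β) ^ ((1 : ℝ) / 2) * (1 + β) ^ (-(1 : ℝ) / 6) * (1 - β) ^ (-(1 : ℝ) / 3)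
      = ((3 - β) / (1 + β)) ^ ((1 : ℝ) / 2) * (1 / 2 * ((1 + β) / (1 - β)) ^ ((1 : ℝ) / 3)) := by
    rw [show -(1 : ℝ) / 6 = 1 / 3 - 1 / 2 by norm_num, Real.rpow_sub h1,
      show -(1 : ℝ) / 3 = -(1 / 3) by norm_num, Real.rpow_neg h2.le, Real.div_rpow h3.le h1.le,
      Real.div_rpow h1.le h2.le]
    ring
  rw [hξη, mul_pow, ← Real.sqrt_eq_rpow, Real.sq_sqrt (div_pos h3 h1).le]
  field_simp

theorem stmt18 (β : ℝ) (hβ1 : -1 < β) (hβ2 : β < 0) (ξ01 η0 : ℝ) (z1 z2 : ℂ)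
    (hξ0 : ξ01 = 1 / 2 * (3 - β) ^ ((1 : ℝ) / 2) * (1 + β) ^ (-(1 : ℝ) / 6)
        * (1 - β) ^ (-(1 : ℝ) / 3))
    (hη0 : η0 = 1 / 2 * ((1 + β) / (1 - β)) ^ ((1 : ℝ) / 3))
    (hz1 : z1 = (ξ01 : ℂ) + (η0 : ℂ) * I)
    (hz2 : z2 = -(ξ01 : ℂ) + (η0 : ℂ) * I) :
    I - z1 ^ 3 - (β : ℂ) * z1 * z2 ^ 2 = 0
    ∧ I - (β : ℂ) * z1 ^ 2 * z2 - z2 ^ 3 = 0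
    ∧ (I * (z1 + z2)
        - 1 / 4 * (z1 ^ 4 + 2 * (β : ℂ) * z1 ^ 2 * z2 ^ 2 + z2 ^ 4)).re
        = -(3 / 4) * ((1 + β) / (1 - β)) ^ ((1 : ℝ) / 3) := by
  have h1 : (0 : ℝ) < 1 + β := by linarith
  have hη3 : 8 * (1 - β) * η0 ^ 3 = 1 + β := hη0 ▸ saddle_height_cube h1 (by linarith)
  have hξ2 : (1 + β) * ξ01 ^ 2 = (3 - β) * η0 ^ 2 :=
    hξ0 ▸ hη0 ▸ saddle_width_sq h1 (by linarith) (by linarith)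
  have hE₁ := critical_eq_of_real h1.ne' hξ2 hη3
  have hE₂ := critical_eq_of_real (a := -ξ01) h1.ne' (by rwa [neg_sq]) hη3
  push_cast at hE₂
  rw [← hz1, ← hz2] at hE₁
  rw [neg_neg, ← hz1, ← hz2] at hE₂
  refine ⟨hE₁, by linear_combination hE₂, ?_⟩
  have hφ : 3 / 4 * I * (z1 + z2) = ((-(3 / 2) * η0 : ℝ) : ℂ) := by
    rw [hz1, hz2]
    push_cast
    linear_combination (3 / 2 * (η0 : ℂ)) * I_sq
  rw [phase_eq_of_critical hE₁ (by linear_combination hE₂), hφ, ofReal_re, hη0]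
  ring
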